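/- arXiv:2203.10434 — 3 statements merged into one kernel-verified Lean document; each statement's English description precedes it below -/
import Mathlib

section
/- Let n, τ, U be as in the context and let γ : I → U be a geodesic curve, i.e. γ'(s) = ∇τ(γ(s))/n(γ(s))² for all s ∈ I. Then for every s ∈ I the derivative of the function s ↦ Δτ(γ(s)) satisfies d/ds [Δτ(γ(s))] ≤ 6·n₀₀². (Lemma 3.1.) -/
/-!
Along the geodesic, `d/ds Δτ(γ s) = ∇τ·∇Δτ / n²`. Bochner's formula
`½ Δ|∇τ|² = |∇²τ|² + ∇τ·∇Δτ` combined with the eikonal equation `|∇τ|² = n²` gives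
`∇τ·∇Δτ = |∇n|² + n Δn - |∇²τ|² ≤ |∇n|² + n Δn ≤ 6 n₀₀²`, and dividing by `n² ≥ 1`
preserves this upper bound.
-/

open Real Set

/-- The partial derivative `∂_{x_i} f` of `f : ℝ³ → ℝ`. -/
noncomputable def pd (i : Fin 3) (f : (Fin 3 → ℝ) → ℝ) (x : Fin 3 → ℝ) : ℝ :=
  fderiv ℝ f x (Pi.single i 1)

/-- The Laplacian `Δ f = Σᵢ ∂_{x_i}² f`. -/
noncomputable def lap (f : (Fin 3 → ℝ) → ℝ) (x : Fin 3 → ℝ) : ℝ :=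
  ∑ i : Fin 3, pd i (pd i f) x

open Filter Topology

lemma ContDiffAt.eventually_differentiableAt {𝕜 E F : Type*} [NontriviallyNormedField 𝕜]
    [NormedAddCommGroup E] [NormedSpace 𝕜 E] [NormedAddCommGroup F] [NormedSpace 𝕜 F]
    {f : E → F} {x : E} {k : WithTop ℕ∞} (hf : ContDiffAt 𝕜 k f x) (hk : 1 ≤ k) :
    ∀ᶠ y in 𝓝 x, DifferentiableAt 𝕜 f y :=
  ((hf.of_le hk).eventually (by simp)).mono fun _ hy => hy.differentiableAt one_ne_zero

section PartialDerivatives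

variable {f g : (Fin 3 → ℝ) → ℝ} {x : Fin 3 → ℝ}

lemma fderiv_apply_eq_sum_pd (f : (Fin 3 → ℝ) → ℝ) (x v : Fin 3 → ℝ) :
    fderiv ℝ f x v = ∑ i, v i * pd i f x := by
  conv_lhs => rw [← Finset.univ_sum_single v]
  refine (map_sum _ _ _).trans (Finset.sum_congr rfl fun i _ => ?_)
  rw [pd, ← smul_eq_mul, ← map_smul, ← Pi.single_smul, smul_eq_mul, mul_one]

lemma Filter.EventuallyEq.pd (h : f =ᶠ[𝓝 x] g) (i : Fin 3) : pd i f =ᶠ[𝓝 x] pd i g :=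
  (h.fderiv (𝕜 := ℝ)).mono fun y hy => by simp only [_root_.pd, hy]

lemma Filter.EventuallyEq.lap_eq (h : f =ᶠ[𝓝 x] g) : lap f x = lap g x :=
  Finset.sum_congr rfl fun i _ => ((h.pd i).pd i).eq_of_nhds

lemma contDiffAt_pd {k m : WithTop ℕ∞} (hf : ContDiffAt ℝ k f x) (hmk : m + 1 ≤ k) (i : Fin 3) :
    ContDiffAt ℝ m (pd i f) x :=
  (hf.fderiv_right hmk).clm_apply contDiffAt_const

lemma pd_mul (hf : DifferentiableAt ℝ f x) (hg : DifferentiableAt ℝ g x) (i : Fin 3) :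
    pd i (fun y => f y * g y) x = pd i f x * g x + f x * pd i g x := by
  rw [pd, fderiv_fun_mul hf hg]
  simp only [add_apply, smul_apply, smul_eq_mul, pd]
  ring

lemma pd_const_mul (hf : DifferentiableAt ℝ f x) (c : ℝ) (i : Fin 3) :
    pd i (fun y => c * f y) x = c * pd i f x := by
  rw [pd, fderiv_const_mul hf]
  rfl

lemma pd_sum {ι : Type*} [Fintype ι] {f : ι → (Fin 3 → ℝ) → ℝ}
    (hf : ∀ k, DifferentiableAt ℝ (f k) x) (i : Fin 3) :
    pd i (fun y => ∑ k, f k y) x = ∑ k, pd i (f k) x := by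
  rw [pd, fderiv_fun_sum fun k _ => hf k]
  simp only [sum_apply, pd]

lemma pd_pow_two (hf : DifferentiableAt ℝ f x) (i : Fin 3) :
    pd i (fun y => f y ^ 2) x = 2 * (f x * pd i f x) := by
  simp only [sq, pd_mul hf hf]
  ring

lemma pd_comm (hf : ContDiffAt ℝ 2 f x) (i j : Fin 3) :
    pd i (pd j f) x = pd j (pd i f) x := by
  have hdf : DifferentiableAt ℝ (fderiv ℝ f) x :=
    (hf.fderiv_right (m := 1) (by norm_num)).differentiableAt one_ne_zero
  have hessian : ∀ a b : Fin 3,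
      pd a (pd b f) x = fderiv ℝ (fderiv ℝ f) x (Pi.single a 1) (Pi.single b 1) := by
    intro a b
    rw [pd, show pd b f = fun y => fderiv ℝ f y (Pi.single b 1) from rfl,
      fderiv_clm_apply hdf (differentiableAt_const _)]
    simp
  rw [hessian, hessian, hf.isSymmSndFDerivAt (by simp)]

lemma ContDiffAt.pd_comm_eventuallyEq (hf : ContDiffAt ℝ 2 f x) (i j : Fin 3) :
    pd i (pd j f) =ᶠ[𝓝 x] pd j (pd i f) :=
  (hf.eventually (by simp)).mono fun _ hy => pd_comm hy i j

lemma contDiffAt_lap {k m : WithTop ℕ∞} (hf : ContDiffAt ℝ k f x) (hmk : m + 2 ≤ k) :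
    ContDiffAt ℝ m (lap f) x :=
  have hpd : ∀ i, ContDiffAt ℝ (m + 1) (pd i f) x := fun i =>
    contDiffAt_pd hf (by simpa [add_assoc, one_add_one_eq_two] using hmk) i
  ContDiffAt.sum fun i _ => contDiffAt_pd (hpd i) le_rfl i

lemma lap_sum {ι : Type*} [Fintype ι] {f : ι → (Fin 3 → ℝ) → ℝ}
    (hf : ∀ k, ContDiffAt ℝ 2 (f k) x) :
    lap (fun y => ∑ k, f k y) x = ∑ k, lap (f k) x := by
  have hpd_sum : ∀ i, pd i (fun y => ∑ k, f k y) =ᶠ[𝓝 x] fun y => ∑ k, pd i (f k) y := by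
    intro i
    filter_upwards [eventually_all.2 fun k => (hf k).eventually_differentiableAt one_le_two]
      with y hy
    exact pd_sum hy i
  calc lap (fun y => ∑ k, f k y) x = ∑ i, pd i (fun y => ∑ k, pd i (f k) y) x :=
        Finset.sum_congr rfl fun i _ => ((hpd_sum i).pd i).eq_of_nhds
    _ = ∑ i, ∑ k, pd i (pd i (f k)) x := Finset.sum_congr rfl fun i _ =>
        pd_sum (fun k => (contDiffAt_pd (hf k) le_rfl i).differentiableAt one_ne_zero) i
    _ = ∑ k, lap (f k) x := Finset.sum_comm

lemma lap_pow_two (hf : ContDiffAt ℝ 2 f x) :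
    lap (fun y => f y ^ 2) x = 2 * (∑ i, pd i f x ^ 2 + f x * lap f x) := by
  have hpd_sq : ∀ i, pd i (fun y => f y ^ 2) =ᶠ[𝓝 x] fun y => 2 * (f y * pd i f y) := fun i =>
    (hf.eventually_differentiableAt one_le_two).mono fun _ hy => pd_pow_two hy i
  have hd := hf.differentiableAt two_ne_zero
  have hd_pd : ∀ i, DifferentiableAt ℝ (pd i f) x := fun i =>
    (contDiffAt_pd hf le_rfl i).differentiableAt one_ne_zero
  calc lap (fun y => f y ^ 2) x = ∑ i, pd i (fun y => 2 * (f y * pd i f y)) x :=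
        Finset.sum_congr rfl fun i _ => ((hpd_sq i).pd i).eq_of_nhds
    _ = ∑ i, 2 * (pd i f x * pd i f x + f x * pd i (pd i f) x) :=
        Finset.sum_congr rfl fun i _ => by
          rw [pd_const_mul (hd.fun_mul (hd_pd i)), pd_mul hd (hd_pd i)]
    _ = 2 * (∑ i, pd i f x ^ 2 + f x * lap f x) := by
        simp only [lap, Finset.mul_sum, ← Finset.sum_add_distrib]
        exact Finset.sum_congr rfl fun i _ => by ring

lemma lap_pd_comm (hf : ContDiffAt ℝ 3 f x) (k : Fin 3) : lap (pd k f) x = pd k (lap f) x := by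
  have hpd : ∀ i, ContDiffAt ℝ 2 (pd i f) x := fun i => contDiffAt_pd hf (by norm_num) i
  calc lap (pd k f) x = ∑ i, pd i (pd k (pd i f)) x := Finset.sum_congr rfl fun i _ =>
        (((hf.of_le (by norm_num)).pd_comm_eventuallyEq i k).pd i).eq_of_nhds
    _ = ∑ i, pd k (pd i (pd i f)) x := Finset.sum_congr rfl fun i _ => pd_comm (hpd i) i k
    _ = pd k (lap f) x := (pd_sum (fun i =>
        (contDiffAt_pd (hpd i) (m := 1) (by norm_num) i).differentiableAt one_ne_zero) k).symm

lemma lap_sum_sq_pd (hf : ContDiffAt ℝ 3 f x) :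
    lap (fun y => ∑ i, pd i f y ^ 2) x =
      2 * (∑ j, ∑ i, pd i (pd j f) x ^ 2 + ∑ j, pd j f x * pd j (lap f) x) := by
  have hpd : ∀ j, ContDiffAt ℝ 2 (pd j f) x := fun j => contDiffAt_pd hf (by norm_num) j
  rw [lap_sum (f := fun j y => pd j f y ^ 2) fun j => (hpd j).pow 2]
  simp only [lap_pow_two (hpd _), lap_pd_comm hf, mul_add, Finset.mul_sum,
    ← Finset.sum_add_distrib]

lemma sum_sq_pd_add_mul_lap_le {C : ℝ}
    (h0 : |f x| ≤ C) (h1 : ∀ i, |pd i f x| ≤ C) (h2 : ∀ i, |pd i (pd i f) x| ≤ C) :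
    ∑ i, pd i f x ^ 2 + f x * lap f x ≤ 6 * C ^ 2 := by
  have hterm : ∀ i, pd i f x ^ 2 + f x * pd i (pd i f) x ≤ 2 * C ^ 2 := by
    intro i
    have hsq : pd i f x ^ 2 ≤ C ^ 2 := sq_le_sq' (abs_le.1 (h1 i)).1 (abs_le.1 (h1 i)).2
    have hprod : f x * pd i (pd i f) x ≤ C ^ 2 :=
      calc f x * pd i (pd i f) x ≤ |f x| * |pd i (pd i f) x| := by
            rw [← abs_mul]; exact le_abs_self _
        _ ≤ C * C := mul_le_mul h0 (h2 i) (abs_nonneg _) ((abs_nonneg _).trans h0)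
        _ = C ^ 2 := (sq C).symm
    linarith
  calc ∑ i, pd i f x ^ 2 + f x * lap f x = ∑ i, (pd i f x ^ 2 + f x * pd i (pd i f) x) := by
        rw [lap, Finset.mul_sum, Finset.sum_add_distrib]
    _ ≤ ∑ _i : Fin 3, 2 * C ^ 2 := Finset.sum_le_sum fun i _ => hterm i
    _ = 6 * C ^ 2 := by simp; ring

end PartialDerivatives

theorem stmt0_general
    (n₀₀ : ℝ)
    (n : (Fin 3 → ℝ) → ℝ) (hn : ContDiff ℝ 2 n)
    (hn1 : ∀ x, 1 ≤ n x)
    (hb0 : ∀ x, |n x| ≤ n₀₀)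
    (hb1 : ∀ x, ∀ i : Fin 3, |pd i n x| ≤ n₀₀)
    (hb2 : ∀ x, ∀ i j : Fin 3, |pd i (pd j n) x| ≤ n₀₀)
    (U : Set (Fin 3 → ℝ)) (hU : IsOpen U)
    (τ : (Fin 3 → ℝ) → ℝ) (hτ : ContDiffOn ℝ 3 τ U)
    (heik : ∀ x ∈ U, ∑ i : Fin 3, (pd i τ x) ^ 2 = (n x) ^ 2)
    (I : Set ℝ) (γ : ℝ → (Fin 3 → ℝ))
    (hγU : ∀ s ∈ I, γ s ∈ U)
    (hgeo : ∀ s ∈ I, HasDerivAt γ (fun i => pd i τ (γ s) / (n (γ s)) ^ 2) s) :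
    ∀ s ∈ I, ∀ d : ℝ, HasDerivAt (fun u => lap τ (γ u)) d s → d ≤ 6 * n₀₀ ^ 2 := by
  intro s hs d hd
  set x := γ s
  have hUx : U ∈ 𝓝 x := hU.mem_nhds (hγU s hs)
  have hτx : ContDiffAt ℝ 3 τ x := hτ.contDiffAt hUx
  have hd_eq : d = (∑ i, pd i τ x * pd i (lap τ) x) / n x ^ 2 := by
    have hlap : DifferentiableAt ℝ (lap τ) x :=
      (contDiffAt_lap hτx (m := 1) (by norm_num)).differentiableAt one_ne_zero
    rw [hd.unique (hlap.hasFDerivAt.comp_hasDerivAt s (hgeo s hs)), fderiv_apply_eq_sum_pd,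
      Finset.sum_div]
    exact Finset.sum_congr rfl fun i _ => by ring
  have hbochner := lap_sum_sq_pd hτx
  rw [(eventuallyEq_of_mem hUx heik).lap_eq, lap_pow_two hn.contDiffAt] at hbochner
  have hhess : 0 ≤ ∑ j, ∑ i, pd i (pd j τ) x ^ 2 := by positivity
  have hbound := sum_sq_pd_add_mul_lap_le (hb0 x) (hb1 x) fun i => hb2 x i i
  have hC : 0 ≤ 6 * n₀₀ ^ 2 := by positivity
  have hnx : 1 ≤ n x ^ 2 := one_le_pow₀ (hn1 x)
  rw [hd_eq, div_le_iff₀ (by positivity)]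
  linarith [mul_le_mul_of_nonneg_left hnx hC]

theorem stmt0
    (n₀ n₀₀ : ℝ) (hn₀ : 1 < n₀) (hn₀n₀₀ : n₀ < n₀₀)
    (n : (Fin 3 → ℝ) → ℝ) (hn : ContDiff ℝ 2 n)
    (hn1 : ∀ x, 1 ≤ n x) (hn2 : ∀ x, n x ≤ n₀)
    (hb0 : ∀ x, |n x| ≤ n₀₀)
    (hb1 : ∀ x, ∀ i : Fin 3, |pd i n x| ≤ n₀₀)
    (hb2 : ∀ x, ∀ i j : Fin 3, |pd i (pd j n) x| ≤ n₀₀)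
    (U : Set (Fin 3 → ℝ)) (hU : IsOpen U)
    (τ : (Fin 3 → ℝ) → ℝ) (hτ : ContDiffOn ℝ 3 τ U)
    (heik : ∀ x ∈ U, ∑ i : Fin 3, (pd i τ x) ^ 2 = (n x) ^ 2)
    (I : Set ℝ) (γ : ℝ → (Fin 3 → ℝ))
    (hγU : ∀ s ∈ I, γ s ∈ U)
    (hgeo : ∀ s ∈ I, HasDerivAt γ (fun i => pd i τ (γ s) / (n (γ s)) ^ 2) s) :
    ∀ s ∈ I, ∀ d : ℝ, HasDerivAt (fun u => lap τ (γ u)) d s → d ≤ 6 * n₀₀ ^ 2 :=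
  stmt0_general n₀₀ n hn hn1 hb0 hb1 hb2 U hU τ hτ heik I γ hγU hgeo
end

section
/- Let n : ℝ³ → ℝ be C¹ and let τ be C² on an open set U ⊆ ℝ³ containing a point (x,y,0), with |∇τ|² = n² on U. Assume τ(x',y',0) = 0 for every point (x',y',0) ∈ U of the plane {z = 0}, that ∂_zτ(x,y,0) = 1, and that ∂_z n(x,y,0) = 0. Then Δτ(x,y,0) = 0. (Equality (6.160) in the proof of Theorem 3.1.) -/
/-!
Since `τ` vanishes on the plane `{z = 0}`, so do its tangential derivatives `∂₁τ`, `∂₂τ`, and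
therefore `∂₁²τ` and `∂₂²τ` vanish at the point. Differentiating the eikonal equation in `z` gives
`Σᵢ ∂ᵢτ ∂_z∂ᵢτ = n ∂_z n`, which at the point, where `∇τ = (0, 0, 1)` and `∂_z n = 0`, reads
`∂_z²τ = 0`.
-/

open Real Set

open Filter Topology

lemma pd_eq_zero_of_eventually_eq_zero_on_hyperplane {f : (Fin 3 → ℝ) → ℝ} {q : Fin 3 → ℝ}
    {i k : Fin 3} (hik : i ≠ k) (hf : DifferentiableAt ℝ f q) (hq : q k = 0)
    (h : ∀ᶠ x in 𝓝 q, x k = 0 → f x = 0) : pd i f q = 0 := by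
  have hline : Tendsto (fun t : ℝ => q + t • Pi.single i 1) (𝓝 0) (𝓝 q) := by
    have : Continuous fun t : ℝ => q + t • Pi.single i (1 : ℝ) := by fun_prop
    simpa using this.tendsto 0
  have hzero : (fun t : ℝ => f (q + t • Pi.single i 1)) =ᶠ[𝓝 0] fun _ => 0 :=
    (hline.eventually h).mono fun t ht => ht (by simp [hq, Pi.single_eq_of_ne' hik])
  rw [pd, ← hf.lineDeriv_eq_fderiv, lineDeriv, hzero.deriv_eq, deriv_const]

lemma pd_eq_zero_on_hyperplane {f : (Fin 3 → ℝ) → ℝ} {U : Set (Fin 3 → ℝ)} (hU : IsOpen U)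
    {i k : Fin 3} (hik : i ≠ k) (hf : ∀ x ∈ U, DifferentiableAt ℝ f x)
    (h : ∀ x ∈ U, x k = 0 → f x = 0) : ∀ x ∈ U, x k = 0 → pd i f x = 0 := fun x hx hxk =>
  pd_eq_zero_of_eventually_eq_zero_on_hyperplane hik (hf x hx) hxk
    (eventually_of_mem (hU.mem_nhds hx) (h ·))

lemma ContDiffOn.differentiableAt_pd {f : (Fin 3 → ℝ) → ℝ} {U : Set (Fin 3 → ℝ)}
    (hf : ContDiffOn ℝ 2 f U) (hU : IsOpen U) (i : Fin 3) {x : Fin 3 → ℝ} (hx : x ∈ U) :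
    DifferentiableAt ℝ (pd i f) x :=
  (((hf.fderiv_of_isOpen hU (by norm_num)).clm_apply contDiffOn_const).differentiableOn
    one_ne_zero).differentiableAt (hU.mem_nhds hx)

lemma sum_mul_pd_eq_mul_pd_of_sum_sq_eventuallyEq {ι : Type*} [Fintype ι]
    {g : ι → (Fin 3 → ℝ) → ℝ} {n : (Fin 3 → ℝ) → ℝ} {p : Fin 3 → ℝ}
    (hg : ∀ i, DifferentiableAt ℝ (g i) p) (hn : DifferentiableAt ℝ n p)
    (h : (fun x => ∑ i, g i x ^ 2) =ᶠ[𝓝 p] fun x => n x ^ 2) (k : Fin 3) :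
    ∑ i, g i p * pd k (g i) p = n p * pd k n p := by
  have hlhs := HasFDerivAt.fun_sum (u := Finset.univ) fun i _ => (hg i).hasFDerivAt.pow 2
  have hderiv := congrArg (· (Pi.single k (1 : ℝ)))
    ((hlhs.congr_of_eventuallyEq h.symm).unique (hn.hasFDerivAt.pow 2))
  simp only [sum_apply, smul_apply, smul_eq_mul,
    nsmul_eq_mul, Nat.cast_ofNat, Nat.add_one_sub_one, pow_one, mul_assoc,
    ← Finset.mul_sum] at hderiv
  simpa [pd] using hderiv

theorem stmt5
    (n : (Fin 3 → ℝ) → ℝ) (hn : ContDiff ℝ 1 n)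
    (U : Set (Fin 3 → ℝ)) (hU : IsOpen U)
    (τ : (Fin 3 → ℝ) → ℝ) (hτ : ContDiffOn ℝ 2 τ U)
    (p : Fin 3 → ℝ) (hp : p ∈ U) (hpz : p 2 = 0)
    (heik : ∀ x ∈ U, ∑ i : Fin 3, (pd i τ x) ^ 2 = (n x) ^ 2)
    (hτ0 : ∀ q ∈ U, q 2 = 0 → τ q = 0)
    (hτz : pd 2 τ p = 1)
    (hnz : pd 2 n p = 0) :
    lap τ p = 0 := by
  have hτd : ∀ x ∈ U, DifferentiableAt ℝ τ x := fun x hx =>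
    (hτ.differentiableOn two_ne_zero).differentiableAt (hU.mem_nhds hx)
  have htangential : ∀ i ≠ 2, ∀ x ∈ U, x 2 = 0 → pd i τ x = 0 := fun i hi =>
    pd_eq_zero_on_hyperplane hU hi hτd hτ0
  have hsecond : ∀ i ≠ 2, pd i (pd i τ) p = 0 := fun i hi =>
    pd_eq_zero_on_hyperplane hU hi (fun x hx => hτ.differentiableAt_pd hU i hx)
      (htangential i hi) p hp hpz
  have hnormal : pd 2 (pd 2 τ) p = 0 := by
    have := sum_mul_pd_eq_mul_pd_of_sum_sq_eventuallyEq (fun i => hτ.differentiableAt_pd hU i hp)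
      (hn.differentiable one_ne_zero p) (eventually_of_mem (hU.mem_nhds hp) heik) 2
    simpa [Fin.sum_univ_three, htangential 0 (by decide) p hp hpz,
      htangential 1 (by decide) p hp hpz, hτz, hnz] using this
  simp [lap, Fin.sum_univ_three, hsecond 0 (by decide), hsecond 1 (by decide), hnormal]
end

section
/- Let U ⊆ ℝ³ be open, let τ, A : U → ℝ be C² with A(x) > 0 on U, let P̂ : U × ℝ → ℝ be C² with P̂(x,0) = 0 for all x ∈ U, and set P(x,t) = t·(A(x) + P̂(x,t)). Assume that ΔP(x,t) − 2∇_x(∂_tP)(x,t)·∇τ(x) − ∂_tP(x,t)·Δτ(x) = 0 for all (x,t) ∈ U × ℝ. Then Δτ(x) + 2·(∇A(x)/A(x))·∇τ(x) = 0 for every x ∈ U, i.e. Δτ + 2∇(ln A)·∇τ = 0 on U. (The derivation of the second equation of system (3.40).) -/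
/-! At `t = 0` the function `P(·, 0)` vanishes identically and `∂_tP(·, 0) = A`, so the equation
becomes `-2 ∇A·∇τ - A Δτ = 0`; divide by `A > 0`. -/

open Real Set

open Filter Topology

lemma hasDerivAt_mul_self_zero {g : ℝ → ℝ} (hg : ContinuousAt g 0) :
    HasDerivAt (fun s => s * g s) (g 0) 0 := by
  rw [hasDerivAt_iff_tendsto_slope_zero]
  refine (tendsto_nhdsWithin_of_tendsto_nhds hg).congr' ?_
  filter_upwards [self_mem_nhdsWithin] with t (ht : t ≠ 0)
  simp [ht]

lemma pd_congr_of_eventuallyEq (i : Fin 3) {f g : (Fin 3 → ℝ) → ℝ} {x : Fin 3 → ℝ}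
    (h : f =ᶠ[𝓝 x] g) : pd i f x = pd i g x := by
  rw [pd, pd, h.fderiv_eq]

lemma pd_const (i : Fin 3) (c : ℝ) : pd i (fun _ => c) = fun _ => 0 := by
  ext x
  simp [pd]

lemma lap_const (c : ℝ) (x : Fin 3 → ℝ) : lap (fun _ => c) x = 0 := by
  simp [lap, pd_const]

theorem stmt11_general
    (U : Set (Fin 3 → ℝ)) (hU : IsOpen U)
    (τ A : (Fin 3 → ℝ) → ℝ)
    (hApos : ∀ x ∈ U, 0 < A x)
    (Ph : (Fin 3 → ℝ) → ℝ → ℝ)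
    (hPh : ContDiffOn ℝ 2 (fun q : (Fin 3 → ℝ) × ℝ => Ph q.1 q.2)
      (U ×ˢ (Set.univ : Set ℝ)))
    (hPh0 : ∀ x ∈ U, Ph x 0 = 0)
    (hpde : ∀ x ∈ U, ∀ t : ℝ,
      lap (fun y => t * (A y + Ph y t)) x
        - 2 * ∑ i : Fin 3,
            pd i (fun y => deriv (fun s => s * (A y + Ph y s)) t) x * pd i τ x
        - deriv (fun s => s * (A x + Ph x s)) t * lap τ x = 0) :
    ∀ x ∈ U, lap τ x + 2 * ∑ i : Fin 3, (pd i A x / A x) * pd i τ x = 0 := by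
  intro x hx
  have hPh_cont : ∀ y ∈ U, ContinuousAt (Ph y) 0 := fun y hy =>
    (hPh.continuousOn.continuousAt ((hU.prod isOpen_univ).mem_nhds ⟨hy, trivial⟩)).comp
      (f := fun s => (y, s)) (continuousAt_const.prodMk continuousAt_id)
  have hdt : ∀ y ∈ U, deriv (fun s => s * (A y + Ph y s)) 0 = A y := fun y hy => by
    have hg : ContinuousAt (fun s => A y + Ph y s) 0 := continuousAt_const.add (hPh_cont y hy)
    rw [(hasDerivAt_mul_self_zero hg).deriv, hPh0 y hy, add_zero]
  have hgrad : ∀ i, pd i (fun y => deriv (fun s => s * (A y + Ph y s)) 0) x = pd i A x :=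
    fun i => pd_congr_of_eventuallyEq i (eventually_of_mem (hU.mem_nhds hx) hdt)
  have h := hpde x hx 0
  simp only [zero_mul, lap_const, hgrad, hdt x hx] at h
  have hA : A x ≠ 0 := (hApos x hx).ne'
  simp_rw [div_mul_eq_mul_div, ← Finset.sum_div]
  field_simp
  linarith

theorem stmt11
    (U : Set (Fin 3 → ℝ)) (hU : IsOpen U)
    (τ A : (Fin 3 → ℝ) → ℝ)
    (hτ : ContDiffOn ℝ 2 τ U) (hA : ContDiffOn ℝ 2 A U)
    (hApos : ∀ x ∈ U, 0 < A x)
    (Ph : (Fin 3 → ℝ) → ℝ → ℝ)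
    (hPh : ContDiffOn ℝ 2 (fun q : (Fin 3 → ℝ) × ℝ => Ph q.1 q.2)
      (U ×ˢ (Set.univ : Set ℝ)))
    (hPh0 : ∀ x ∈ U, Ph x 0 = 0)
    (hpde : ∀ x ∈ U, ∀ t : ℝ,
      lap (fun y => t * (A y + Ph y t)) x
        - 2 * ∑ i : Fin 3,
            pd i (fun y => deriv (fun s => s * (A y + Ph y s)) t) x * pd i τ x
        - deriv (fun s => s * (A x + Ph x s)) t * lap τ x = 0) :
    ∀ x ∈ U, lap τ x + 2 * ∑ i : Fin 3, (pd i A x / A x) * pd i τ x = 0 :=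
  stmt11_general U hU τ A hApos Ph hPh hPh0 hpde
end
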